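/- The ring (ℂF_k)_r of radial elements of the group ring ℂ[F_k] (the ℂ-span of the sphere sums χ_n) is isomorphic as a ℂ-algebra to the polynomial ring ℂ[x], via the map sending ∑_{i=0}^n a_i χ_i to ∑_{i=0}^n a_i p_i(x). -/

import Mathlib

/-!
For a letter `a` and a reduced word `g ≠ 1`, the word `a⁻¹ g` is one letter shorter than `g` if
`g` starts with `a`, and one letter longer otherwise. The coefficient of `g` in `χ₁ χₙ` counts
the letters `a` with `|a⁻¹ g| = n`, which gives `χ₁ χ₁ = χ₂ + 2k` and
`χ₁ χₙ = χₙ₊₁ + (2k - 1) χₙ₋₁` for `n ≥ 2`, the recursion of the `pₙ`. Hence `χₙ = pₙ(χ₁)`, and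
evaluation at `χ₁` maps `ℂ[x]` onto the radial algebra. It is injective because it sends the basis
`(pₙ)` of `ℂ[x]` (`deg pₙ = n`) to the family `(χₙ)`, which is linearly independent since the
`χₙ` have disjoint nonempty supports.
-/

/-- The sphere of radius `n` about the identity in the free group `F_k`:
the finite set of elements of reduced word length `n`. -/
noncomputable def sphere (k n : ℕ) : Finset (FreeGroup (Fin k)) :=
  (Set.Finite.preimage (Function.Injective.injOn FreeGroup.toWord_injective)
    (List.finite_length_eq ((Fin k) × Bool) n)).toFinset

/-- `χ_n = ∑_{|x| = n} x`, the sum of the sphere of radius `n` in `ℂ[F_k]`. -/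
noncomputable def chi (k n : ℕ) : MonoidAlgebra ℂ (FreeGroup (Fin k)) :=
  ∑ x ∈ sphere k n, MonoidAlgebra.of ℂ (FreeGroup (Fin k)) x

/-- The polynomials `p_0 = 1`, `p_1 = z`, `p_2 = z² - 2k`,
`p_{n+1} = z p_n - (2k-1) p_{n-1}` for `n ≥ 2`. -/
noncomputable def p (k : ℕ) : ℕ → Polynomial ℂ
  | 0 => 1
  | 1 => Polynomial.X
  | 2 => Polynomial.X ^ 2 - Polynomial.C ((2 * k : ℕ) : ℂ)
  | (n + 3) => Polynomial.X * p k (n + 2) - Polynomial.C ((2 * k - 1 : ℕ) : ℂ) * p k (n + 1)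

/-- `e_0 = 1` and `e_n = 2k(2k-1)^{n-1}` for `n ≥ 1`, the cardinality of the sphere. -/
def eN (k n : ℕ) : ℕ := if n = 0 then 1 else 2 * k * (2 * k - 1) ^ (n - 1)

namespace FreeGroup

variable {α : Type*} [DecidableEq α]

theorem toWord_inv_mk_singleton_mul {x : FreeGroup α} {b : α × Bool} {t : List (α × Bool)}
    (hx : x.toWord = b :: t) (a : α × Bool) :
    ((mk [a])⁻¹ * x).toWord = if a = b then t else (a.1, !a.2) :: b :: t := by
  have hred : reduce (b :: t) = b :: t := hx ▸ reduce_toWord x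
  rw [inv_mk, toWord_mul, toWord_mk]
  change reduce ((a.1, !a.2) :: x.toWord) = _
  rw [reduce.cons, hx, hred]
  simp only [Bool.not_inj_iff, Prod.ext_iff]

theorem norm_inv_mk_singleton_mul {x : FreeGroup α} {b : α × Bool} {t : List (α × Bool)}
    (hx : x.toWord = b :: t) (a : α × Bool) :
    ((mk [a])⁻¹ * x).norm = if a = b then t.length else t.length + 2 := by
  rw [norm, toWord_inv_mk_singleton_mul hx]
  split_ifs <;> rfl

theorem norm_inv_mk_singleton (a : α × Bool) : (mk [a])⁻¹.norm = 1 := by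
  rw [norm_inv_eq, norm, toWord_mk, reduce_singleton, List.length_singleton]

end FreeGroup

theorem Fintype.sum_ite_eq_add_nsmul {ι M : Type*} [Fintype ι] [DecidableEq ι] [AddCommMonoid M]
    (b : ι) (u v : M) : ∑ a, (if a = b then u else v) = u + (Fintype.card ι - 1) • v := by
  simp [Finset.sum_ite, Finset.filter_ne', Finset.filter_eq']

open MonoidAlgebra Polynomial

namespace Radial

variable {k : ℕ}

theorem mem_sphere {n : ℕ} {x : FreeGroup (Fin k)} : x ∈ sphere k n ↔ x.norm = n := by
  simp [sphere, FreeGroup.norm]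

theorem coeff_chi (n : ℕ) (x : FreeGroup (Fin k)) :
    (chi k n).coeff x = if x.norm = n then 1 else 0 := by
  classical
  simp [chi, Finsupp.single_apply, mem_sphere]

theorem chi_zero : chi k 0 = 1 := by
  ext x
  simp [coeff_chi, MonoidAlgebra.one_def, Finsupp.single_apply, eq_comm]

theorem sphere_one : sphere k 1 = Finset.univ.image fun a => FreeGroup.mk [a] := by
  ext x
  simp only [mem_sphere, FreeGroup.norm, Finset.mem_image, Finset.mem_univ, true_and,
    List.length_eq_one_iff]
  constructor
  · rintro ⟨a, ha⟩
    exact ⟨a, by rw [← ha, FreeGroup.mk_toWord]⟩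
  · rintro ⟨a, rfl⟩
    exact ⟨a, by rw [FreeGroup.toWord_mk, FreeGroup.reduce_singleton]⟩

theorem chi_one : chi k 1 = ∑ a : Fin k × Bool, single (FreeGroup.mk [a]) 1 := by
  rw [chi, sphere_one, Finset.sum_image]
  · simp only [of_apply]
  · intro a _ b _ h
    simpa [FreeGroup.reduce_singleton] using congrArg FreeGroup.toWord h

theorem coeff_chi_one_mul (y : MonoidAlgebra ℂ (FreeGroup (Fin k))) (g : FreeGroup (Fin k)) :
    (chi k 1 * y).coeff g = ∑ a : Fin k × Bool, y.coeff ((FreeGroup.mk [a])⁻¹ * g) := by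
  simp [chi_one, Finset.sum_mul]

theorem coeff_chi_one_mul_chi_apply_one (n : ℕ) :
    (chi k 1 * chi k n).coeff 1 = if n = 1 then ((2 * k : ℕ) : ℂ) else 0 := by
  simp only [coeff_chi_one_mul, mul_one, coeff_chi, FreeGroup.norm_inv_mk_singleton,
    Finset.sum_const, Finset.card_univ, Fintype.card_prod, Fintype.card_fin, Fintype.card_bool,
    mul_comm k 2]
  rcases eq_or_ne n 1 with rfl | hn
  · simp
  · simp [hn, hn.symm]

theorem coeff_chi_one_mul_chi_apply_of_toWord_eq_cons {g : FreeGroup (Fin k)} {b : Fin k × Bool}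
    {t : List (Fin k × Bool)} (hg : g.toWord = b :: t) (n : ℕ) :
    (chi k 1 * chi k n).coeff g =
      (if t.length = n then 1 else 0) +
        ((2 * k - 1 : ℕ) : ℂ) * if t.length + 2 = n then 1 else 0 := by
  simp only [coeff_chi_one_mul, coeff_chi, FreeGroup.norm_inv_mk_singleton_mul hg]
  rw [Finset.sum_congr rfl fun a _ =>
      apply_ite (fun m => if m = n then (1 : ℂ) else 0) (a = b) _ _,
    Fintype.sum_ite_eq_add_nsmul, Fintype.card_prod, Fintype.card_fin, Fintype.card_bool,
    mul_comm k 2, nsmul_eq_mul]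

theorem chi_one_mul_chi_one : chi k 1 * chi k 1 = chi k 2 + ((2 * k : ℕ) : ℂ) • chi k 0 := by
  ext g
  rcases hg : g.toWord with _ | ⟨b, t⟩
  · rw [FreeGroup.toWord_eq_nil_iff.mp hg]
    simp [coeff_chi_one_mul_chi_apply_one, coeff_chi]
  · rw [coeff_chi_one_mul_chi_apply_of_toWord_eq_cons hg]
    simp [coeff_chi, FreeGroup.norm, hg]

theorem chi_one_mul_chi_add_two (n : ℕ) :
    chi k 1 * chi k (n + 2) = chi k (n + 3) + ((2 * k - 1 : ℕ) : ℂ) • chi k (n + 1) := by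
  ext g
  rcases hg : g.toWord with _ | ⟨b, t⟩
  · rw [FreeGroup.toWord_eq_nil_iff.mp hg]
    simp [coeff_chi_one_mul_chi_apply_one, coeff_chi]
  · rw [coeff_chi_one_mul_chi_apply_of_toWord_eq_cons hg]
    simp [coeff_chi, FreeGroup.norm, hg]

theorem degree_p : ∀ n : ℕ, (p k n).degree = n
  | 0 => by rw [p, degree_one, Nat.cast_zero]
  | 1 => by rw [p, degree_X, Nat.cast_one]
  | 2 => by rw [p, degree_X_pow_sub_C two_pos]
  | n + 3 => by
    have hlead : (X * p k (n + 2)).degree = ↑(n + 3) := by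
      rw [mul_comm, degree_mul_X, degree_p (n + 2)]
      norm_cast
    have hlow : (C ((2 * k - 1 : ℕ) : ℂ) * p k (n + 1)).degree < ↑(n + 3) := by
      rw [← smul_eq_C_mul]
      refine (degree_smul_le _ _).trans_lt ?_
      rw [degree_p (n + 1)]
      exact_mod_cast (by omega : n + 1 < n + 3)
    rw [p, degree_sub_eq_left_of_degree_lt (hlead ▸ hlow), hlead]

theorem span_range_p : Submodule.span ℂ (Set.range (p k)) = ⊤ :=
  Sequence.span (S := ⟨p k, degree_p⟩) fun n =>
    (leadingCoeff_ne_zero.mpr (ne_zero_of_coe_le_degree (degree_p n).ge)).isUnit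

theorem aeval_p : ∀ n : ℕ, aeval (chi k 1) (p k n) = chi k n
  | 0 => by rw [p, map_one, chi_zero]
  | 1 => by rw [p, aeval_X]
  | 2 => by
    rw [p, map_sub, map_pow, aeval_X, aeval_C, sq, chi_one_mul_chi_one, chi_zero,
      Algebra.algebraMap_eq_smul_one, add_sub_cancel_right]
  | n + 3 => by
    rw [p, map_sub, map_mul, map_mul, aeval_X, aeval_C, aeval_p (n + 2), aeval_p (n + 1),
      chi_one_mul_chi_add_two, ← Algebra.smul_def, add_sub_cancel_right]

theorem linearIndependent_chi (hk : 0 < k) : LinearIndependent ℂ (chi k) := by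
  rw [linearIndependent_iff]
  intro l hl
  ext n
  have hcoeff := congrArg (fun y => y.coeff (FreeGroup.of (⟨0, hk⟩ : Fin k) ^ n)) hl
  simpa [Finsupp.linearCombination_apply, Finsupp.sum, coeff_chi, FreeGroup.norm_of_pow]
    using hcoeff

theorem aeval_chi_one_injective (hk : 0 < k) :
    Function.Injective (aeval (R := ℂ) (chi k 1)) := by
  have hcomp : (aeval (chi k 1)).toLinearMap ∘ₗ Finsupp.linearCombination ℂ (p k) =
      Finsupp.linearCombination ℂ (chi k) := by
    ext n
    simp [aeval_p]
  have hsurj : Function.Surjective (Finsupp.linearCombination ℂ (p k)) := by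
    rw [← LinearMap.range_eq_top, Finsupp.range_linearCombination, span_range_p]
  have hinj :=
    linearIndependent_iff_injective_finsuppLinearCombination.mp (linearIndependent_chi hk)
  rw [← hcomp, LinearMap.coe_comp, AlgHom.coe_toLinearMap] at hinj
  exact hinj.of_comp_right hsurj

theorem adjoin_range_chi : Algebra.adjoin ℂ (Set.range (chi k)) = (aeval (chi k 1)).range := by
  refine le_antisymm (Algebra.adjoin_le ?_) ?_
  · rintro _ ⟨n, rfl⟩
    exact ⟨p k n, aeval_p n⟩
  · rw [← Algebra.adjoin_singleton_eq_range_aeval]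
    exact Algebra.adjoin_mono (Set.singleton_subset_iff.mpr ⟨1, rfl⟩)

end Radial

/-- The radial subring `(ℂF_k)_r` (the subalgebra generated by the sphere sums `χ_n`,
which coincides with their `ℂ`-span) is isomorphic as a `ℂ`-algebra to `ℂ[x]`
via the map sending `∑ aᵢ χᵢ` to `∑ aᵢ pᵢ(x)`. -/
theorem stmt15 (k : ℕ) (hk : 2 ≤ k) :
    ∃ T : (Algebra.adjoin ℂ (Set.range (chi k))) ≃ₐ[ℂ] Polynomial ℂ,
      ∀ n : ℕ, T ⟨chi k n, Algebra.subset_adjoin (Set.mem_range_self n)⟩ = p k n := by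
  let e := (AlgEquiv.ofInjective _ (Radial.aeval_chi_one_injective (k := k) (by omega))).trans
    (Subalgebra.equivOfEq _ _ Radial.adjoin_range_chi.symm)
  refine ⟨e.symm, fun n => ?_⟩
  rw [AlgEquiv.symm_apply_eq]
  exact Subtype.ext (Radial.aeval_p n).symm
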